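/- Let (z,w) be coordinates on ℂ² and ω = (1/(w−z))·(dz/z − dw/w). Then ω is a logarithmic 1-form on ℂ² with poles along D = {z=0} ∪ {w=0} ∪ {z=w}, and its residues are Res_{z=0}(ω) = 1/w, Res_{w=0}(ω) = 1/z, Res_{z=w}(ω) = −1/z; in particular each residue has a simple pole at the origin and does not extend holomorphically across Sing(D). -/

import Mathlib

/-!
Near a smooth point of each component of `D` only one of the factors `z`, `w`, `w - z` of the
denominator of `ω` vanishes, and `ω = a · dh/h + η` is a partial fraction expansion; on `{z = w}`
it rests on `1/((w - z) w) = 1/((w - z) z) - 1/(z w)`. A residue `c/z` with `c ≠ 0` cannot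
extend continuously over `0`, since `z · F z` would tend to `0` there while being identically `c`.
-/

open ContinuousLinearMap Filter Topology

attribute [local fun_prop] analyticAt_fst analyticAt_snd

theorem not_continuousAt_zero_of_eq_mul_inv {𝕜 : Type*} [NontriviallyNormedField 𝕜]
    {F : 𝕜 → 𝕜} {c : 𝕜} (hc : c ≠ 0) (hF : ∀ w ≠ 0, F w = c * w⁻¹) :
    ¬ ContinuousAt F 0 := by
  intro hcont
  have h_zero : Tendsto (fun w => w * F w) (𝓝[≠] 0) (𝓝 0) := by
    simpa using (continuousAt_id.fun_mul hcont).tendsto.mono_left nhdsWithin_le_nhds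
  have h_const : Tendsto (fun w => w * F w) (𝓝[≠] 0) (𝓝 c) :=
    tendsto_const_nhds.congr' <| eventually_nhdsWithin_of_forall fun w hw => by
      dsimp only
      rw [hF w hw, mul_left_comm, mul_inv_cancel₀ hw, mul_one]
  exact hc (tendsto_nhds_unique h_const h_zero)

theorem not_exists_analyticOnNhd_univ_eq_mul_inv {c : ℂ} (hc : c ≠ 0) :
    ¬ ∃ F : ℂ → ℂ, AnalyticOnNhd ℂ F Set.univ ∧ ∀ w ≠ 0, F w = c * w⁻¹ := fun ⟨_, hF, hF_eq⟩ =>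
  not_continuousAt_zero_of_eq_mul_inv hc hF_eq (hF 0 trivial).continuousAt

noncomputable def saitoForm (p : ℂ × ℂ) : ℂ × ℂ →L[ℂ] ℂ :=
  ((p.2 - p.1)⁻¹ * p.1⁻¹) • fst ℂ ℂ ℂ - ((p.2 - p.1)⁻¹ * p.2⁻¹) • snd ℂ ℂ ℂ

theorem analyticOnNhd_saitoForm :
    AnalyticOnNhd ℂ saitoForm {p : ℂ × ℂ | p.1 ≠ 0 ∧ p.2 ≠ 0 ∧ p.1 ≠ p.2} := by
  rintro p ⟨hz, hw, hzw⟩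
  have hd : p.2 - p.1 ≠ 0 := sub_ne_zero.mpr hzw.symm
  unfold saitoForm
  fun_prop (disch := assumption)

theorem saitoForm_eq_near_fst_eq_zero (p : ℂ × ℂ) :
    saitoForm p = ((p.2 - p.1)⁻¹ / p.1) • fst ℂ ℂ ℂ + -(((p.2 - p.1)⁻¹ * p.2⁻¹) • snd ℂ ℂ ℂ) := by
  rw [saitoForm, div_eq_mul_inv, sub_eq_add_neg]

theorem saitoForm_eq_near_snd_eq_zero (p : ℂ × ℂ) :
    saitoForm p = (-(p.2 - p.1)⁻¹ / p.2) • snd ℂ ℂ ℂ + ((p.2 - p.1)⁻¹ * p.1⁻¹) • fst ℂ ℂ ℂ := by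
  rw [saitoForm, div_eq_mul_inv, neg_mul]
  module

theorem inv_sub_mul_inv_eq {K : Type*} [Field K] {z w : K} (hz : z ≠ 0) (hw : w ≠ 0)
    (hd : w - z ≠ 0) : (w - z)⁻¹ * w⁻¹ = (w - z)⁻¹ * z⁻¹ - (z * w)⁻¹ := by
  field_simp
  ring

theorem saitoForm_eq_near_diagonal {p : ℂ × ℂ} (hz : p.1 ≠ 0) (hw : p.2 ≠ 0)
    (hd : p.2 - p.1 ≠ 0) :
    saitoForm p = (-p.1⁻¹ / (p.2 - p.1)) • (snd ℂ ℂ ℂ - fst ℂ ℂ ℂ) + (p.1 * p.2)⁻¹ • snd ℂ ℂ ℂ := by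
  rw [saitoForm, inv_sub_mul_inv_eq hz hw hd, div_eq_mul_inv, neg_mul]
  module

theorem saitoForm_logarithmic_along_fst_eq_zero {w₀ : ℂ} (hw₀ : w₀ ≠ 0) :
    ∃ (U : Set (ℂ × ℂ)) (a : ℂ × ℂ → ℂ) (η : ℂ × ℂ → (ℂ × ℂ →L[ℂ] ℂ)),
      IsOpen U ∧ ((0 : ℂ), w₀) ∈ U ∧ AnalyticOnNhd ℂ a U ∧ AnalyticOnNhd ℂ η U ∧
      (∀ p ∈ U, p.1 ≠ 0 → saitoForm p = (a p / p.1) • fst ℂ ℂ ℂ + η p) ∧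
      (∀ p ∈ U, p.1 = 0 → a p = p.2⁻¹) := by
  refine ⟨{p | p.2 ≠ 0 ∧ p.2 - p.1 ≠ 0}, fun p => (p.2 - p.1)⁻¹,
    fun p => -(((p.2 - p.1)⁻¹ * p.2⁻¹) • snd ℂ ℂ ℂ), ?_, ⟨hw₀, by simpa using hw₀⟩,
    fun p ⟨_, _⟩ => by fun_prop (disch := assumption),
    fun p ⟨_, _⟩ => by fun_prop (disch := assumption),
    fun p _ _ => saitoForm_eq_near_fst_eq_zero p, fun p _ hz => by simp only [hz, sub_zero]⟩
  exact (isOpen_ne_fun continuous_snd continuous_const).inter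
    (isOpen_ne_fun (continuous_snd.sub continuous_fst) continuous_const)

theorem saitoForm_logarithmic_along_snd_eq_zero {z₀ : ℂ} (hz₀ : z₀ ≠ 0) :
    ∃ (U : Set (ℂ × ℂ)) (a : ℂ × ℂ → ℂ) (η : ℂ × ℂ → (ℂ × ℂ →L[ℂ] ℂ)),
      IsOpen U ∧ (z₀, (0 : ℂ)) ∈ U ∧ AnalyticOnNhd ℂ a U ∧ AnalyticOnNhd ℂ η U ∧
      (∀ p ∈ U, p.2 ≠ 0 → saitoForm p = (a p / p.2) • snd ℂ ℂ ℂ + η p) ∧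
      (∀ p ∈ U, p.2 = 0 → a p = p.1⁻¹) := by
  refine ⟨{p | p.1 ≠ 0 ∧ p.2 - p.1 ≠ 0}, fun p => -(p.2 - p.1)⁻¹,
    fun p => ((p.2 - p.1)⁻¹ * p.1⁻¹) • fst ℂ ℂ ℂ, ?_, ⟨hz₀, by simpa using hz₀⟩,
    fun p ⟨_, _⟩ => by fun_prop (disch := assumption),
    fun p ⟨_, _⟩ => by fun_prop (disch := assumption),
    fun p _ _ => saitoForm_eq_near_snd_eq_zero p,
    fun p _ hw => by simp only [hw, zero_sub, inv_neg, neg_neg]⟩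
  exact (isOpen_ne_fun continuous_fst continuous_const).inter
    (isOpen_ne_fun (continuous_snd.sub continuous_fst) continuous_const)

theorem saitoForm_logarithmic_along_diagonal {z₀ : ℂ} (hz₀ : z₀ ≠ 0) :
    ∃ (U : Set (ℂ × ℂ)) (a : ℂ × ℂ → ℂ) (η : ℂ × ℂ → (ℂ × ℂ →L[ℂ] ℂ)),
      IsOpen U ∧ (z₀, z₀) ∈ U ∧ AnalyticOnNhd ℂ a U ∧ AnalyticOnNhd ℂ η U ∧
      (∀ p ∈ U, p.2 - p.1 ≠ 0 →
        saitoForm p = (a p / (p.2 - p.1)) • (snd ℂ ℂ ℂ - fst ℂ ℂ ℂ) + η p) ∧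
      (∀ p ∈ U, p.2 - p.1 = 0 → a p = -p.1⁻¹) := by
  refine ⟨{p | p.1 ≠ 0 ∧ p.2 ≠ 0}, fun p => -p.1⁻¹, fun p => (p.1 * p.2)⁻¹ • snd ℂ ℂ ℂ, ?_,
    ⟨hz₀, hz₀⟩, fun p ⟨_, _⟩ => by fun_prop (disch := assumption),
    fun p ⟨_, _⟩ => by fun_prop (disch := simp [*]),
    fun p ⟨hz, hw⟩ hd => saitoForm_eq_near_diagonal hz hw hd, fun _ _ _ => rfl⟩
  exact (isOpen_ne_fun continuous_fst continuous_const).inter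
    (isOpen_ne_fun continuous_snd continuous_const)

/-- **Saito's example of a logarithmic 1-form with non-holomorphic residues.**
The form `ω = (1/(w-z))·(dz/z - dw/w)` on `ℂ²` is a logarithmic `1`-form with poles along
`D = {z=0} ∪ {w=0} ∪ {z=w}`, with residues `Res_{z=0}(ω) = 1/w`, `Res_{w=0}(ω) = 1/z`,
`Res_{z=w}(ω) = -1/z`; each residue has a simple pole at the origin and does not extend
holomorphically across `Sing(D) = {0}`. -/
theorem saito_example :
    let dz : ℂ × ℂ →L[ℂ] ℂ := ContinuousLinearMap.fst ℂ ℂ ℂ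
    let dw : ℂ × ℂ →L[ℂ] ℂ := ContinuousLinearMap.snd ℂ ℂ ℂ
    let ω : ℂ × ℂ → (ℂ × ℂ →L[ℂ] ℂ) := fun p =>
      ((p.2 - p.1)⁻¹ * (p.1)⁻¹) • dz - ((p.2 - p.1)⁻¹ * (p.2)⁻¹) • dw
    -- ω is holomorphic off D
    (AnalyticOnNhd ℂ ω {p : ℂ × ℂ | p.1 ≠ 0 ∧ p.2 ≠ 0 ∧ p.1 ≠ p.2})
    -- logarithmic along {z = 0} with residue 1/w
    ∧ (∀ w₀ : ℂ, w₀ ≠ 0 →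
      ∃ (U : Set (ℂ × ℂ)) (a : ℂ × ℂ → ℂ) (η : ℂ × ℂ → (ℂ × ℂ →L[ℂ] ℂ)),
        IsOpen U ∧ ((0 : ℂ), w₀) ∈ U ∧ AnalyticOnNhd ℂ a U ∧ AnalyticOnNhd ℂ η U ∧
        (∀ p ∈ U, p.1 ≠ 0 → ω p = ((a p) / p.1) • dz + η p) ∧
        (∀ p ∈ U, p.1 = 0 → a p = (p.2)⁻¹))
    -- logarithmic along {w = 0} with residue 1/z
    ∧ (∀ z₀ : ℂ, z₀ ≠ 0 →
      ∃ (U : Set (ℂ × ℂ)) (a : ℂ × ℂ → ℂ) (η : ℂ × ℂ → (ℂ × ℂ →L[ℂ] ℂ)),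
        IsOpen U ∧ (z₀, (0 : ℂ)) ∈ U ∧ AnalyticOnNhd ℂ a U ∧ AnalyticOnNhd ℂ η U ∧
        (∀ p ∈ U, p.2 ≠ 0 → ω p = ((a p) / p.2) • dw + η p) ∧
        (∀ p ∈ U, p.2 = 0 → a p = (p.1)⁻¹))
    -- logarithmic along {z = w} with residue -1/z
    ∧ (∀ z₀ : ℂ, z₀ ≠ 0 →
      ∃ (U : Set (ℂ × ℂ)) (a : ℂ × ℂ → ℂ) (η : ℂ × ℂ → (ℂ × ℂ →L[ℂ] ℂ)),
        IsOpen U ∧ (z₀, z₀) ∈ U ∧ AnalyticOnNhd ℂ a U ∧ AnalyticOnNhd ℂ η U ∧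
        (∀ p ∈ U, p.2 - p.1 ≠ 0 → ω p = ((a p) / (p.2 - p.1)) • (dw - dz) + η p) ∧
        (∀ p ∈ U, p.2 - p.1 = 0 → a p = -(p.1)⁻¹))
    -- the residues do not extend holomorphically across the origin
    ∧ (¬ ∃ F : ℂ → ℂ, AnalyticOnNhd ℂ F Set.univ ∧ ∀ w : ℂ, w ≠ 0 → F w = w⁻¹)
    ∧ (¬ ∃ F : ℂ → ℂ, AnalyticOnNhd ℂ F Set.univ ∧ ∀ z : ℂ, z ≠ 0 → F z = -z⁻¹) := by
  refine ⟨analyticOnNhd_saitoForm, fun _ => saitoForm_logarithmic_along_fst_eq_zero,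
    fun _ => saitoForm_logarithmic_along_snd_eq_zero,
    fun _ => saitoForm_logarithmic_along_diagonal, ?_, ?_⟩
  · simpa using not_exists_analyticOnNhd_univ_eq_mul_inv one_ne_zero
  · simpa using not_exists_analyticOnNhd_univ_eq_mul_inv (neg_ne_zero.mpr one_ne_zero)
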